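/- Let φ1, φ2 be LTL formulas over V and let q ∉ V be a fresh propositional variable. (1) For every infinite trace π' over V ∪ {q} such that π' ⊨ ¬q ∧ G(X q ↔ (φ2 ∨ (φ1 ∧ q))), and for every index i ≥ 0: π',i ⊨ φ2 ∨ (φ1 ∧ q) if and only if π',i ⊨ φ1 S φ2 (i.e., there exists k with 0 ≤ k ≤ i such that π',k ⊨ φ2 and π',j ⊨ φ1 for all j with k < j ≤ i). (2) Every infinite trace π over V can be extended to an infinite trace π' over V ∪ {q} agreeing with π on V such that π' ⊨ ¬q ∧ G(X q ↔ (φ2 ∨ (φ1 ∧ q))). Consequently, there exist an infinite trace and an index i at which φ1 S φ2 holds if and only if there exist an infinite trace π' with π' ⊨ ¬q ∧ G(X q ↔ (φ2 ∨ (φ1 ∧ q))) and an index i with π',i ⊨ φ2 ∨ (φ1 ∧ q). -/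
import Mathlib


/-- Syntax of LTLf / LTL formulas (with past operators). `tt` is ⊤. -/
inductive LTLf (V : Type) : Type where
  | tt      : LTLf V
  | var     : V → LTLf V
  | not     : LTLf V → LTLf V
  | and     : LTLf V → LTLf V → LTLf V
  | or      : LTLf V → LTLf V → LTLf V
  | next    : LTLf V → LTLf V            -- X (strong next)
  | wnext   : LTLf V → LTLf V            -- N (weak next)
  | untl    : LTLf V → LTLf V → LTLf V   -- U
  | release : LTLf V → LTLf V → LTLf V   -- R
  | ev      : LTLf V → LTLf V            -- F
  | glob    : LTLf V → LTLf V            -- G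
  | yest    : LTLf V → LTLf V            -- Y
  | wyest   : LTLf V → LTLf V            -- Z
  | since   : LTLf V → LTLf V → LTLf V   -- S
  | trigger : LTLf V → LTLf V → LTLf V   -- T
  | once    : LTLf V → LTLf V            -- O
  | hist    : LTLf V → LTLf V            -- H

variable {V W : Type}

/-- Finite-trace semantics: the trace is σ[0]…σ[n], position i (intended: i ≤ n). -/
def LTLf.finSat (σ : ℕ → Set V) (n : ℕ) : LTLf V → ℕ → Prop
  | .tt, _ => True
  | .var x, i => x ∈ σ i
  | .not φ, i => ¬ φ.finSat σ n i
  | .and φ ψ, i => φ.finSat σ n i ∧ ψ.finSat σ n i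
  | .or φ ψ, i => φ.finSat σ n i ∨ ψ.finSat σ n i
  | .next φ, i => i < n ∧ φ.finSat σ n (i+1)
  | .wnext φ, i => i = n ∨ φ.finSat σ n (i+1)
  | .untl φ ψ, i => ∃ k, i ≤ k ∧ k ≤ n ∧ ψ.finSat σ n k ∧ ∀ j, i ≤ j → j < k → φ.finSat σ n j
  | .release φ ψ, i => ¬ ∃ k, i ≤ k ∧ k ≤ n ∧ ¬ ψ.finSat σ n k ∧ ∀ j, i ≤ j → j < k → ¬ φ.finSat σ n j
  | .ev φ, i => ∃ k, i ≤ k ∧ k ≤ n ∧ φ.finSat σ n k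
  | .glob φ, i => ∀ k, i ≤ k → k ≤ n → φ.finSat σ n k
  | .yest φ, i => 1 ≤ i ∧ φ.finSat σ n (i-1)
  | .wyest φ, i => i = 0 ∨ φ.finSat σ n (i-1)
  | .since φ ψ, i => ∃ k, k ≤ i ∧ ψ.finSat σ n k ∧ ∀ j, k < j → j ≤ i → φ.finSat σ n j
  | .trigger φ ψ, i => ∀ k, k ≤ i → ψ.finSat σ n k ∨ ∃ j, k < j ∧ j ≤ i ∧ φ.finSat σ n j
  | .once φ, i => ∃ k, k ≤ i ∧ φ.finSat σ n k
  | .hist φ, i => ∀ k, k ≤ i → φ.finSat σ n k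

/-- Infinite-trace (LTL) semantics. -/
def LTLf.infSat (π : ℕ → Set V) : LTLf V → ℕ → Prop
  | .tt, _ => True
  | .var x, i => x ∈ π i
  | .not φ, i => ¬ φ.infSat π i
  | .and φ ψ, i => φ.infSat π i ∧ ψ.infSat π i
  | .or φ ψ, i => φ.infSat π i ∨ ψ.infSat π i
  | .next φ, i => φ.infSat π (i+1)
  | .wnext φ, i => φ.infSat π (i+1)
  | .untl φ ψ, i => ∃ k, i ≤ k ∧ ψ.infSat π k ∧ ∀ j, i ≤ j → j < k → φ.infSat π j
  | .release φ ψ, i => ¬ ∃ k, i ≤ k ∧ ¬ ψ.infSat π k ∧ ∀ j, i ≤ j → j < k → ¬ φ.infSat π j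
  | .ev φ, i => ∃ k, i ≤ k ∧ φ.infSat π k
  | .glob φ, i => ∀ k, i ≤ k → φ.infSat π k
  | .yest φ, i => 1 ≤ i ∧ φ.infSat π (i-1)
  | .wyest φ, i => i = 0 ∨ φ.infSat π (i-1)
  | .since φ ψ, i => ∃ k, k ≤ i ∧ ψ.infSat π k ∧ ∀ j, k < j → j ≤ i → φ.infSat π j
  | .trigger φ ψ, i => ∀ k, k ≤ i → ψ.infSat π k ∨ ∃ j, k < j ∧ j ≤ i ∧ φ.infSat π j
  | .once φ, i => ∃ k, k ≤ i ∧ φ.infSat π k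
  | .hist φ, i => ∀ k, k ≤ i → φ.infSat π k

/-- Material implication. -/
def LTLf.imp (a b : LTLf V) : LTLf V := .or a.not b

/-- Bi-implication. -/
def LTLf.iff (a b : LTLf V) : LTLf V := .and (a.imp b) (b.imp a)

/-- Variable renaming. -/
def LTLf.map (f : V → W) : LTLf V → LTLf W
  | .tt => .tt
  | .var x => .var (f x)
  | .not φ => .not (φ.map f)
  | .and φ ψ => .and (φ.map f) (ψ.map f)
  | .or φ ψ => .or (φ.map f) (ψ.map f)
  | .next φ => .next (φ.map f)
  | .wnext φ => .wnext (φ.map f)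
  | .untl φ ψ => .untl (φ.map f) (ψ.map f)
  | .release φ ψ => .release (φ.map f) (ψ.map f)
  | .ev φ => .ev (φ.map f)
  | .glob φ => .glob (φ.map f)
  | .yest φ => .yest (φ.map f)
  | .wyest φ => .wyest (φ.map f)
  | .since φ ψ => .since (φ.map f) (ψ.map f)
  | .trigger φ ψ => .trigger (φ.map f) (ψ.map f)
  | .once φ => .once (φ.map f)
  | .hist φ => .hist (φ.map f)

/-- The `end` variable used in the LTLf → LTL translation. -/
def endVar : LTLf (Option V) := .var none

/-- The translation t(·) from LTLf over `V` to LTL over `V ∪ {end}` (here `Option V`,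
with `none` playing the role of `end`). -/
def ftol : LTLf V → LTLf (Option V)
  | .tt => .tt
  | .var x => .var (some x)
  | .not φ => .not (ftol φ)
  | .and φ ψ => .and (ftol φ) (ftol ψ)
  | .or φ ψ => .or (ftol φ) (ftol ψ)
  | .next φ => .next (.and (.not endVar) (ftol φ))
  | .wnext φ => .next (.or endVar (ftol φ))
  | .untl φ ψ => .untl (ftol φ) (.and (.not endVar) (ftol ψ))
  | .release φ ψ => .release (ftol φ) (.or endVar (ftol ψ))
  | .ev φ => .ev (.and (.not endVar) (ftol φ))
  | .glob φ => .glob (.or endVar (ftol φ))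
  | .yest φ => .yest (ftol φ)
  | .wyest φ => .wyest (ftol φ)
  | .since φ ψ => .since (ftol φ) (ftol ψ)
  | .trigger φ ψ => .trigger (ftol φ) (ftol ψ)
  | .once φ => .once (ftol φ)
  | .hist φ => .hist (ftol φ)

/-- The LTL formula `F end ∧ G(end → X end) ∧ t(φ)` of Corollary 1. -/
def ftolFull (φ : LTLf V) : LTLf (Option V) :=
  .and (.ev endVar) (.and (.glob (endVar.imp (.next endVar))) (ftol φ))

/-- Conjunction of a list of formulas (⊤ for the empty list). -/
def bigAnd : List (LTLf V) → LTLf V := List.foldr .and .tt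

/-- `φ₂' ∨ (φ₁' ∧ q)` where q is the fresh variable (`none` in `Option V`) and
φ₁, φ₂ are lifted to `V ∪ {q}` via `map some`. -/
def sinceBody (φ₁ φ₂ : LTLf V) : LTLf (Option V) :=
  .or (φ₂.map some) (.and (φ₁.map some) (.var none))

/-- The monitor formula `¬q ∧ G(X q ↔ (φ₂ ∨ (φ₁ ∧ q)))` for `φ₁ S φ₂`. -/
def sMonitor (φ₁ φ₂ : LTLf V) : LTLf (Option V) :=
  .and (LTLf.var none).not (.glob ((LTLf.next (.var none)).iff (sinceBody φ₁ φ₂)))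

lemma map_infSat (φ : LTLf V) (f : V → W) (π : ℕ → Set W) :
    ∀ i, (φ.map f).infSat π i ↔ φ.infSat (fun j => f ⁻¹' π j) i := by
  induction φ with
  | tt => intro i; simp [LTLf.map, LTLf.infSat]
  | _ => intro i; simp [LTLf.map, LTLf.infSat, *]

lemma since_rec (φ₁ φ₂ : LTLf V) (π : ℕ → Set V) (i : ℕ) :
    (LTLf.since φ₁ φ₂).infSat π i ↔
      φ₂.infSat π i ∨ (φ₁.infSat π i ∧ ∃ i', i = i' + 1 ∧ (LTLf.since φ₁ φ₂).infSat π i') := by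
  constructor
  · rintro ⟨k, hk, hψ, hφ⟩
    rcases eq_or_lt_of_le hk with rfl | hlt
    · exact Or.inl hψ
    · obtain ⟨i', rfl⟩ : ∃ i', i = i' + 1 :=
        ⟨i - 1, (Nat.succ_pred_eq_of_pos (Nat.pos_of_ne_zero (by omega))).symm⟩
      exact Or.inr ⟨hφ (i'+1) hlt le_rfl, i', rfl,
        ⟨k, Nat.lt_succ_iff.mp hlt, hψ, fun j hj1 hj2 => hφ j hj1 (Nat.le_succ_of_le hj2)⟩⟩
  · rintro (h | ⟨h1, i', rfl, k, hk, hψ, hφ⟩)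
    · exact ⟨i, le_rfl, h, fun j hj1 hj2 => absurd (lt_of_lt_of_le hj1 hj2) (lt_irrefl i)⟩
    · refine ⟨k, Nat.le_succ_of_le hk, hψ, fun j hj1 hj2 => ?_⟩
      rcases eq_or_lt_of_le hj2 with rfl | hlt
      · exact h1
      · exact hφ j hj1 (Nat.lt_succ_iff.mp hlt)

/-- Part 1 as a standalone lemma. -/
lemma monitor_correct (φ₁ φ₂ : LTLf V) (π' : ℕ → Set (Option V))
    (hmon : (sMonitor φ₁ φ₂).infSat π' 0) (i : ℕ) :
    (sinceBody φ₁ φ₂).infSat π' i ↔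
      (LTLf.since (φ₁.map some) (φ₂.map some)).infSat π' i := by
  obtain ⟨h0, hG⟩ := hmon
  have hG' : ∀ k, (none ∈ π' (k+1)) ↔ (sinceBody φ₁ φ₂).infSat π' k := by
    intro k
    have := hG k (Nat.zero_le k)
    simp only [LTLf.iff, LTLf.imp, sinceBody, LTLf.infSat] at this ⊢
    tauto
  have h0' : ¬ (none ∈ π' 0) := h0
  have key : ∀ i, (none ∈ π' i) ↔
      ∃ i', i = i' + 1 ∧ (LTLf.since (φ₁.map some) (φ₂.map some)).infSat π' i' := by
    intro i
    induction i with
    | zero => simp [h0']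
    | succ n ih =>
      rw [hG' n]
      constructor
      · rintro hb
        refine ⟨n, rfl, ?_⟩
        rw [since_rec]
        rcases hb with h | ⟨ha, hq⟩
        · exact Or.inl h
        · exact Or.inr ⟨ha, ih.mp hq⟩
      · rintro ⟨i', hi, hs⟩
        obtain rfl : i' = n := by omega
        rw [since_rec] at hs
        rcases hs with h | ⟨ha, hrest⟩
        · exact Or.inl h
        · exact Or.inr ⟨ha, ih.mpr hrest⟩
  show (φ₂.map some).infSat π' i ∨ ((φ₁.map some).infSat π' i ∧ none ∈ π' i) ↔ _
  rw [key i, since_rec]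

/-- correctness of the monitor for S (since).
(1) On any trace satisfying the monitor, at every i, `φ₂ ∨ (φ₁ ∧ q)` holds iff
`φ₁ S φ₂` holds at i.
(2) Every trace over V extends (agreeing on V) to one satisfying the monitor.
(3) Consequently `φ₁ S φ₂` is "reachable" iff `φ₂ ∨ (φ₁ ∧ q)` is, under the monitor. -/
theorem since_monitor (V : Type) (φ₁ φ₂ : LTLf V) :
    (∀ π' : ℕ → Set (Option V), (sMonitor φ₁ φ₂).infSat π' 0 →
      ∀ i : ℕ,
        ((sinceBody φ₁ φ₂).infSat π' i ↔
          (LTLf.since (φ₁.map some) (φ₂.map some)).infSat π' i))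
    ∧
    (∀ π : ℕ → Set V, ∃ π' : ℕ → Set (Option V),
        (∀ i, {x : V | some x ∈ π' i} = π i) ∧ (sMonitor φ₁ φ₂).infSat π' 0)
    ∧
    ((∃ (π : ℕ → Set V) (i : ℕ), (LTLf.since φ₁ φ₂).infSat π i) ↔
     (∃ (π' : ℕ → Set (Option V)) (i : ℕ), (sMonitor φ₁ φ₂).infSat π' 0 ∧
        (sinceBody φ₁ φ₂).infSat π' i)) := by
  classical
  have part2 : ∀ π : ℕ → Set V, ∃ π' : ℕ → Set (Option V),
      (∀ i, {x : V | some x ∈ π' i} = π i) ∧ (sMonitor φ₁ φ₂).infSat π' 0 := by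
    intro π
    set S : ℕ → Prop := fun i => (LTLf.since φ₁ φ₂).infSat π i with hS
    refine ⟨fun i => {x | match x with
      | some v => v ∈ π i
      | none => ∃ i', i = i' + 1 ∧ S i'}, ?_, ?_, ?_⟩
    · intro i; ext x; simp [Set.mem_setOf_eq]
    · show ¬ (none ∈ _); simp
    · intro k _
      set π' : ℕ → Set (Option V) := fun i => {x | match x with
        | some v => v ∈ π i
        | none => ∃ i', i = i' + 1 ∧ S i'} with hπ'
      have hpre : (fun j => (some : V → Option V) ⁻¹' π' j) = π := by
        funext j; ext x; simp [hπ', Set.mem_preimage, Set.mem_setOf_eq]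
      have hA : (none ∈ π' (k+1)) ↔ S k := by
        show (∃ i', k + 1 = i' + 1 ∧ S i') ↔ S k
        exact ⟨fun ⟨i', hi, hs⟩ => (by omega : i' = k) ▸ hs, fun hs => ⟨k, rfl, hs⟩⟩
      have hB : (sinceBody φ₁ φ₂).infSat π' k ↔ S k := by
        show (φ₂.map some).infSat π' k ∨ ((φ₁.map some).infSat π' k ∧ none ∈ π' k) ↔ _
        rw [map_infSat, map_infSat, hpre]
        have hq : (none ∈ π' k) ↔ ∃ i', k = i' + 1 ∧ S i' := Iff.rfl
        rw [hq]
        exact (since_rec φ₁ φ₂ π k).symm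
      show ((¬ none ∈ π' (k+1)) ∨ (sinceBody φ₁ φ₂).infSat π' k) ∧
        ((¬ (sinceBody φ₁ φ₂).infSat π' k) ∨ none ∈ π' (k+1))
      rw [hA, hB]
      tauto
  refine ⟨fun π' hmon i => monitor_correct φ₁ φ₂ π' hmon i, part2, ?_⟩
  constructor
  · rintro ⟨π, i, hsat⟩
    obtain ⟨π', hagree, hmon⟩ := part2 π
    refine ⟨π', i, hmon, (monitor_correct φ₁ φ₂ π' hmon i).mpr ?_⟩
    have hpre : (fun j => (some : V → Option V) ⁻¹' π' j) = π := by
      funext j; ext x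
      have := hagree j
      simp only [Set.ext_iff, Set.mem_setOf_eq] at this
      exact this x
    have : (LTLf.since (φ₁.map some) (φ₂.map some)) = (LTLf.since φ₁ φ₂).map some := rfl
    rw [this, map_infSat, hpre]
    exact hsat
  · rintro ⟨π', i, hmon, hb⟩
    have hs := (monitor_correct φ₁ φ₂ π' hmon i).mp hb
    refine ⟨fun j => some ⁻¹' π' j, i, ?_⟩
    have : (LTLf.since (φ₁.map some) (φ₂.map some)) = (LTLf.since φ₁ φ₂).map some := rfl
    rw [this, map_infSat] at hs
    exact hs
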